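/- Let (λ, x) be an eigenpair of a symmetric tensor A with α > β(A), and let J(x;α) = [(m−1)(A x^{m−2} − λ x xᵀ) + α(I − x xᵀ)]/(λ+α). If the projected Hessian C(λ,x) = Uᵀ((m−1)A x^{m−2} − λI)U is negative definite (U an orthonormal basis of x^⊥), then ρ(J(x;α)) < 1. Conversely, if C(λ,x) is not negative definite, then ρ(J(x;α)) ≥ 1. -/

import Mathlib

noncomputable section
open scoped BigOperators
open Metric Filter

abbrev En (n : ℕ) := EuclideanSpace ℝ (Fin n)

def Symm {m n : ℕ} (A : (Fin m → Fin n) → ℝ) : Prop :=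
  ∀ (p : Equiv.Perm (Fin m)) (i : Fin m → Fin n), A (i ∘ p) = A i

def tmul {m n : ℕ} (A : (Fin m → Fin n) → ℝ) (x : En n) : ℝ :=
  ∑ i : Fin m → Fin n, A i * ∏ k, x (i k)

def tvec {m n : ℕ} (A : (Fin (m+1) → Fin n) → ℝ) (x : En n) : En n :=
  WithLp.toLp 2 (fun j => ∑ i : Fin m → Fin n, A (Fin.cons j i) * ∏ k, x (i k))

def tmat {m n : ℕ} (A : (Fin (m+2) → Fin n) → ℝ) (x : En n) : Matrix (Fin n) (Fin n) ℝ :=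
  fun j k => ∑ i : Fin m → Fin n, A (Fin.cons j (Fin.cons k i)) * ∏ l, x (i l)

def quadForm {n : ℕ} (M : Matrix (Fin n) (Fin n) ℝ) (y : En n) : ℝ :=
  ∑ j, ∑ k, y j * M j k * y k

def srad {n : ℕ} (M : Matrix (Fin n) (Fin n) ℝ) : ℝ :=
  ⨆ y : sphere (0 : En n) 1, |quadForm M (y : En n)|

def beta {m n : ℕ} (A : (Fin (m+2) → Fin n) → ℝ) : ℝ :=
  ((m:ℝ)+1) * ⨆ x : sphere (0 : En n) 1, srad (tmat A (x : En n))

/-! Let `B = tmat A x`; symmetry of `A` makes `B` symmetric, and the eigen-equation reads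
`B x = λ x`. With `w = y - ⟪x, y⟫ x` the component of `y` orthogonal to `x`, the quadratic
form of the Jacobian is `yᵀ J y = (c · wᵀ B w + α ‖w‖²) / (λ + α)`, where `c = m + 1` is the
paper's `m - 1` (the tensor has order `m + 2` here). As `c |wᵀ B w| ≤ β(A) ‖w‖² < α ‖w‖²`,
this form is nonnegative, so `ρ(J)` is its maximum over the unit sphere: that maximum is `< 1`
when `c · wᵀ B w < λ ‖w‖²` on `x^⊥ \ {0}`, while a unit `w ⊥ x` violating this gives
`wᵀ J w ≥ 1`. -/

open Matrix
open scoped RealInnerProductSpace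

section InnerProduct

variable {E : Type*} [NormedAddCommGroup E] [InnerProductSpace ℝ E] {x : E}

lemma inner_sub_inner_smul_self (hx : ‖x‖ = 1) (y : E) :
    ⟪x, y - ⟪x, y⟫ • x⟫ = 0 := by
  rw [inner_sub_right, real_inner_smul_right, real_inner_self_eq_norm_sq, hx]
  ring

lemma norm_sub_inner_smul_self_sq (hx : ‖x‖ = 1) (y : E) :
    ‖y - ⟪x, y⟫ • x‖ ^ 2 = ‖y‖ ^ 2 - ⟪x, y⟫ ^ 2 := by
  rw [norm_sub_sq_real, real_inner_smul_right, norm_smul, hx, mul_one, real_inner_comm,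
    Real.norm_eq_abs, sq_abs]
  ring

end InnerProduct

lemma EuclideanSpace.real_inner_eq_dotProduct {n : ℕ} (x y : En n) :
    ⟪x, y⟫ = x.ofLp ⬝ᵥ y.ofLp := by
  rw [EuclideanSpace.inner_eq_star_dotProduct, star_trivial, dotProduct_comm]

lemma quadForm_eq_dotProduct {n : ℕ} (M : Matrix (Fin n) (Fin n) ℝ) (y : En n) :
    quadForm M y = y.ofLp ⬝ᵥ (M *ᵥ y.ofLp) := by
  simp only [quadForm, dotProduct, mulVec, Finset.mul_sum, mul_assoc]

lemma quadForm_smul {n : ℕ} (M : Matrix (Fin n) (Fin n) ℝ) (t : ℝ) (y : En n) :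
    quadForm M (t • y) = t ^ 2 * quadForm M y := by
  simp only [quadForm_eq_dotProduct, WithLp.ofLp_smul, mulVec_smul, smul_dotProduct,
    dotProduct_smul, smul_eq_mul]
  ring

lemma continuous_quadForm {n : ℕ} (M : Matrix (Fin n) (Fin n) ℝ) :
    Continuous (quadForm M) := by
  unfold quadForm
  fun_prop

def jacobian {n : ℕ} (c α lam : ℝ) (B : Matrix (Fin n) (Fin n) ℝ) (x : En n) :
    Matrix (Fin n) (Fin n) ℝ :=
  (lam + α)⁻¹ • (c • (B - lam • vecMulVec x x) + α • (1 - vecMulVec x x))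

section Eigenvector

variable {n : ℕ} {B : Matrix (Fin n) (Fin n) ℝ} {x : En n} {lam : ℝ}

lemma quadForm_eq_of_mulVec_eq (hBx : B *ᵥ x.ofLp = lam • x.ofLp) (hx : ‖x‖ = 1) :
    quadForm B x = lam := by
  rw [quadForm_eq_dotProduct, hBx, dotProduct_smul, ← EuclideanSpace.real_inner_eq_dotProduct,
    real_inner_self_eq_norm_sq, hx]
  simp

lemma quadForm_sub_inner_smul (hB : B.IsSymm) (hBx : B *ᵥ x.ofLp = lam • x.ofLp)
    (hx : ‖x‖ = 1) (y : En n) :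
    quadForm B (y - ⟪x, y⟫ • x) = quadForm B y - lam * ⟪x, y⟫ ^ 2 := by
  have hxB (v : Fin n → ℝ) : x.ofLp ⬝ᵥ (B *ᵥ v) = lam * (x.ofLp ⬝ᵥ v) := by
    rw [dotProduct_mulVec, ← hB.eq, vecMul_transpose, hBx, smul_dotProduct, smul_eq_mul]
  have hxx : x.ofLp ⬝ᵥ x.ofLp = 1 := by
    rw [← EuclideanSpace.real_inner_eq_dotProduct, real_inner_self_eq_norm_sq, hx, one_pow]
  simp only [quadForm_eq_dotProduct, EuclideanSpace.real_inner_eq_dotProduct, WithLp.ofLp_sub,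
    WithLp.ofLp_smul, mulVec_sub, mulVec_smul, hBx, sub_dotProduct, dotProduct_sub,
    smul_dotProduct, dotProduct_smul, smul_eq_mul, hxB, hxx]
  rw [dotProduct_comm y.ofLp x.ofLp]
  ring

lemma quadForm_jacobian (hB : B.IsSymm) (hBx : B *ᵥ x.ofLp = lam • x.ofLp) (hx : ‖x‖ = 1)
    (c α : ℝ) (y : En n) :
    quadForm (jacobian c α lam B x) y
      = (lam + α)⁻¹ * (c * quadForm B (y - ⟪x, y⟫ • x) + α * ‖y - ⟪x, y⟫ • x‖ ^ 2) := by
  rw [quadForm_sub_inner_smul hB hBx hx, norm_sub_inner_smul_self_sq hx,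
    ← real_inner_self_eq_norm_sq]
  simp only [jacobian, quadForm_eq_dotProduct, EuclideanSpace.real_inner_eq_dotProduct,
    smul_mulVec, add_mulVec, sub_mulVec, one_mulVec, vecMulVec_mulVec, dotProduct_smul, dotProduct_add,
    dotProduct_sub, smul_eq_mul, op_smul_eq_mul]
  rw [dotProduct_comm y.ofLp x.ofLp]
  ring

end Eigenvector

section SpectralRadius

variable {n : ℕ} (M : Matrix (Fin n) (Fin n) ℝ)

lemma bddAbove_abs_quadForm :
    BddAbove (Set.range fun y : sphere (0 : En n) 1 => |quadForm M y|) :=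
  (isCompact_range ((continuous_quadForm M).comp continuous_subtype_val).abs).bddAbove

lemma srad_nonneg : 0 ≤ srad M :=
  Real.iSup_nonneg fun _ => abs_nonneg _

lemma abs_quadForm_le_srad {y : En n} (hy : ‖y‖ = 1) : |quadForm M y| ≤ srad M :=
  le_ciSup (bddAbove_abs_quadForm M) ⟨y, by simpa using hy⟩

lemma abs_quadForm_le_srad_mul_norm_sq (y : En n) : |quadForm M y| ≤ srad M * ‖y‖ ^ 2 := by
  rcases eq_or_ne y 0 with rfl | hy
  · simp [quadForm]
  have hy' : ‖y‖ ≠ 0 := norm_ne_zero_iff.2 hy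
  have h := abs_quadForm_le_srad M (y := ‖y‖⁻¹ • y) (by simp [norm_smul, hy'])
  rw [quadForm_smul, abs_mul, abs_of_nonneg (by positivity), inv_pow,
    inv_mul_le_iff₀ (by positivity)] at h
  linarith

lemma srad_lt_of_forall_lt (hne : (sphere (0 : En n) 1).Nonempty) {r : ℝ}
    (h : ∀ y : En n, ‖y‖ = 1 → |quadForm M y| < r) : srad M < r := by
  obtain ⟨y₀, hy₀, hmax⟩ :=
    (isCompact_sphere (0 : En n) 1).exists_isMaxOn hne (continuous_quadForm M).abs.continuousOn
  have hy₀' : ‖y₀‖ = 1 := by simpa using hy₀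
  calc srad M ≤ |quadForm M y₀| := Real.iSup_le (fun y => hmax y.2) (abs_nonneg _)
    _ < r := h y₀ hy₀'

end SpectralRadius

section Tensor

variable {m n : ℕ} (A : (Fin (m+2) → Fin n) → ℝ)

lemma tmat_isSymm (hA : Symm A) (x : En n) : (tmat A x).IsSymm := by
  ext j k
  refine Finset.sum_congr rfl fun i _ => ?_
  congr 1
  rw [← hA (Equiv.swap 0 1)]
  congr 1
  ext l
  refine Fin.cases ?_ (fun l' => Fin.cases ?_ (fun l'' => ?_) l') l
  · simp
  · simp
  · rw [Function.comp_apply, Equiv.swap_apply_of_ne_of_ne (Fin.succ_ne_zero _)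
      (by simp [Fin.ext_iff])]
    simp only [Fin.cons_succ]

lemma tmat_mulVec_self (x : En n) : tmat A x *ᵥ x.ofLp = (tvec A x).ofLp := by
  ext j
  simp only [mulVec, dotProduct, tmat, tvec, Finset.sum_mul]
  rw [← (Fin.consEquiv fun _ : Fin (m+1) => Fin n).sum_comp
    (fun i => A (Fin.cons j i) * ∏ l, x.ofLp (i l)), Fintype.sum_prod_type]
  refine Finset.sum_congr rfl fun k _ => Finset.sum_congr rfl fun i _ => ?_
  simp only [Fin.consEquiv, Equiv.coe_fn_mk, Fin.prod_univ_succ, Fin.cons_zero, Fin.cons_succ]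
  ring

lemma bddAbove_srad_tmat :
    BddAbove (Set.range fun x : sphere (0 : En n) 1 => srad (tmat A x)) := by
  have hcont : Continuous fun p : sphere (0 : En n) 1 × sphere (0 : En n) 1 =>
      |quadForm (tmat A p.1) p.2| := by
    unfold quadForm tmat
    fun_prop
  obtain ⟨C, hC⟩ := (isCompact_range hcont).bddAbove
  refine ⟨C, ?_⟩
  rintro _ ⟨x, rfl⟩
  have : Nonempty (sphere (0 : En n) 1) := ⟨x⟩
  exact ciSup_le fun y => hC ⟨(x, y), rfl⟩

lemma srad_tmat_le_beta {x : En n} (hx : ‖x‖ = 1) :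
    ((m : ℝ) + 1) * srad (tmat A x) ≤ beta A :=
  mul_le_mul_of_nonneg_left (le_ciSup (bddAbove_srad_tmat A) ⟨x, by simpa using hx⟩)
    (by positivity)

end Tensor

section Stability

variable {n : ℕ} {B : Matrix (Fin n) (Fin n) ℝ} {x : En n} {lam c α : ℝ}

lemma abs_le_srad_of_mulVec_eq (hBx : B *ᵥ x.ofLp = lam • x.ofLp) (hx : ‖x‖ = 1) :
    |lam| ≤ srad B :=
  quadForm_eq_of_mulVec_eq hBx hx ▸ abs_quadForm_le_srad B hx

lemma quadForm_jacobian_nonneg (hB : B.IsSymm) (hBx : B *ᵥ x.ofLp = lam • x.ofLp)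
    (hx : ‖x‖ = 1) (hc : 0 ≤ c) (hα : c * srad B ≤ α) (hlα : 0 < lam + α) (y : En n) :
    0 ≤ quadForm (jacobian c α lam B x) y := by
  rw [quadForm_jacobian hB hBx hx]
  set w := y - ⟪x, y⟫ • x
  have hw : -(srad B * ‖w‖ ^ 2) ≤ quadForm B w :=
    (abs_le.1 (abs_quadForm_le_srad_mul_norm_sq B w)).1
  have : 0 ≤ c * quadForm B w + α * ‖w‖ ^ 2 := by nlinarith [sq_nonneg ‖w‖]
  positivity

lemma quadForm_jacobian_lt_one (hB : B.IsSymm) (hBx : B *ᵥ x.ofLp = lam • x.ofLp)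
    (hx : ‖x‖ = 1) (hlα : 0 < lam + α)
    (hneg : ∀ y : En n, y ≠ 0 → ⟪x, y⟫ = 0 → c * quadForm B y < lam * ‖y‖ ^ 2)
    {y : En n} (hy : ‖y‖ = 1) :
    quadForm (jacobian c α lam B x) y < 1 := by
  rw [quadForm_jacobian hB hBx hx, inv_mul_lt_one₀ hlα]
  set w := y - ⟪x, y⟫ • x with hw_def
  rcases eq_or_ne w 0 with hw | hw
  · simpa [hw, quadForm] using hlα
  have hw_le : ‖w‖ ^ 2 ≤ 1 := by
    rw [hw_def, norm_sub_inner_smul_self_sq hx, hy]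
    nlinarith [sq_nonneg (⟪x, y⟫)]
  have := hneg w hw (inner_sub_inner_smul_self hx y)
  nlinarith

lemma one_le_srad_jacobian (hB : B.IsSymm) (hBx : B *ᵥ x.ofLp = lam • x.ofLp)
    (hx : ‖x‖ = 1) (hlα : 0 < lam + α) {y : En n} (hy : y ≠ 0) (horth : ⟪x, y⟫ = 0)
    (hge : lam * ‖y‖ ^ 2 ≤ c * quadForm B y) :
    1 ≤ srad (jacobian c α lam B x) := by
  have hy' : ‖y‖ ≠ 0 := norm_ne_zero_iff.2 hy
  set u := ‖y‖⁻¹ • y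
  have hu : ‖u‖ = 1 := by simp [u, norm_smul, hy']
  have horth_u : ⟪x, u⟫ = 0 := by simp [u, real_inner_smul_right, horth]
  have hge_u : lam ≤ c * quadForm B u := by
    rw [quadForm_smul, inv_pow, ← mul_assoc, mul_comm c, mul_assoc,
      le_inv_mul_iff₀ (by positivity)]
    linarith
  calc 1 ≤ quadForm (jacobian c α lam B x) u := by
        rw [quadForm_jacobian hB hBx hx, horth_u, zero_smul, sub_zero, hu, le_inv_mul_iff₀ hlα]
        linarith
    _ ≤ srad (jacobian c α lam B x) := (le_abs_self _).trans (abs_quadForm_le_srad _ hu)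

theorem srad_jacobian_lt_one_iff (hB : B.IsSymm) (hBx : B *ᵥ x.ofLp = lam • x.ofLp)
    (hx : ‖x‖ = 1) (hc : 1 ≤ c) (hα : c * srad B < α) :
    srad (jacobian c α lam B x) < 1 ↔
      ∀ y : En n, y ≠ 0 → ⟪x, y⟫ = 0 → c * quadForm B y < lam * ‖y‖ ^ 2 := by
  have hlα : 0 < lam + α := by
    have := (abs_le.1 (abs_le_srad_of_mulVec_eq hBx hx)).1
    nlinarith [srad_nonneg B]
  constructor
  · intro h y hy horth
    by_contra! hge
    exact (one_le_srad_jacobian hB hBx hx hlα hy horth hge).not_gt h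
  · intro hneg
    refine srad_lt_of_forall_lt _ ⟨x, by simpa using hx⟩ fun y hy => ?_
    rw [abs_of_nonneg (quadForm_jacobian_nonneg hB hBx hx (by linarith) hα.le hlα y)]
    exact quadForm_jacobian_lt_one hB hBx hx hlα hneg hy

end Stability

/-- Stability: with α > β(A) and J(x;α) the SS-HOPM Jacobian at an eigenpair (λ,x),
ρ(J) < 1 if the projected Hessian C(λ,x) is negative definite on x^⊥, and ρ(J) ≥ 1
otherwise. -/
theorem stmt16 {m n : ℕ} (A : (Fin (m+2) → Fin n) → ℝ) (hA : Symm A)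
    (α : ℝ) (hα : α > beta A)
    (lam : ℝ) (x : En n) (hx : ‖x‖ = 1) (heig : tvec A x = lam • x) :
    ((∀ y : En n, y ≠ 0 → (inner ℝ x y : ℝ) = 0 →
        ((m : ℝ) + 1) * quadForm (tmat A x) y < lam * ‖y‖^2) →
      srad ((lam + α)⁻¹ • (((m : ℝ) + 1) • (tmat A x - lam • Matrix.vecMulVec x x)
        + α • ((1 : Matrix (Fin n) (Fin n) ℝ) - Matrix.vecMulVec x x))) < 1) ∧
    (¬ (∀ y : En n, y ≠ 0 → (inner ℝ x y : ℝ) = 0 →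
        ((m : ℝ) + 1) * quadForm (tmat A x) y < lam * ‖y‖^2) →
      1 ≤ srad ((lam + α)⁻¹ • (((m : ℝ) + 1) • (tmat A x - lam • Matrix.vecMulVec x x)
        + α • ((1 : Matrix (Fin n) (Fin n) ℝ) - Matrix.vecMulVec x x)))) := by
  have hBx : tmat A x *ᵥ x.ofLp = lam • x.ofLp := by rw [tmat_mulVec_self, heig]; rfl
  have key := srad_jacobian_lt_one_iff (tmat_isSymm A hA x) hBx hx
    (le_add_of_nonneg_left m.cast_nonneg) ((srad_tmat_le_beta A hx).trans_lt hα)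
  exact ⟨key.2, fun h => not_lt.1 (mt key.1 h)⟩
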